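/- Let n ≥ 1 and let F ⊆ ℕⁿ be a nonempty finite set, with Newton polyhedron Γ₊ the convex hull in ℝⁿ of ⋃_{ν∈F} ({ν} + [0,∞)ⁿ). Then (1,1,…,1) lies in the interior of Γ₊ if and only if m(a) < s(a) for every nonzero a ∈ [0,∞)ⁿ, where m(a) = min_{ν∈F} ⟨a,ν⟩ and s(a) = a₁ + ⋯ + aₙ. -/

import Mathlib

/-!
If `1` is interior to `Γ₊`, then for `a ≥ 0`, `a ≠ 0` the point `1 - t a` lies in `Γ₊` for small
`t > 0`, and `m(a) ≤ ⟨a, 1 - t a⟩ = s(a) - t ‖a‖² < s(a)`, because `⟨a, ·⟩ ≥ m(a)` on `Γ₊`.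
Conversely, if `1` is not interior to the convex body `Γ₊`, a supporting hyperplane gives `a ≠ 0`
with `⟨a, 1⟩ ≤ ⟨a, x⟩` on `Γ₊`; since `Γ₊` contains the orthant translates `ν + [0,∞)ⁿ`, this
forces `a ≥ 0`, and evaluating at the vertices `ν ∈ F` gives `s(a) ≤ m(a)`.
-/

open scoped Pointwise

section

variable {ι : Type*} [Fintype ι]

lemma nonneg_of_forall_le_add_mul {a b c : ℝ} (h : ∀ t, 0 ≤ t → c ≤ b + t * a) : 0 ≤ a := by
  by_contra! ha
  have key := h ((b - c + 1) / -a) (div_nonneg (by linarith [h 0 le_rfl]) (by linarith))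
  rw [div_mul_eq_mul_div, div_neg, mul_div_cancel_right₀ _ ha.ne] at key
  linarith

lemma nonneg_of_forall_dotProduct_le_dotProduct_add {a p y : ι → ℝ}
    (h : ∀ c, 0 ≤ c → a ⬝ᵥ y ≤ a ⬝ᵥ (p + c)) : 0 ≤ a := by
  classical
  intro i
  refine nonneg_of_forall_le_add_mul (b := a ⬝ᵥ p) (c := a ⬝ᵥ y) fun t ht => ?_
  have hc : (0 : ι → ℝ) ≤ Pi.single i t := Pi.single_nonneg.2 ht
  simpa [dotProduct_add, dotProduct_single, mul_comm] using h _ hc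

lemma exists_dotProduct_lt_of_mem_interior {s : Set (ι → ℝ)} {y a : ι → ℝ}
    (hy : y ∈ interior s) (ha : a ≠ 0) : ∃ x ∈ s, a ⬝ᵥ x < a ⬝ᵥ y := by
  have hline : Filter.Tendsto (fun t : ℝ => y - t • a) (nhdsWithin 0 (Set.Ioi 0)) (nhds y) := by
    have : Continuous fun t : ℝ => y - t • a := by fun_prop
    simpa using (this.tendsto 0).mono_left nhdsWithin_le_nhds
  obtain ⟨t, hts, ht⟩ :=
    ((hline.eventually (mem_interior_iff_mem_nhds.1 hy)).and self_mem_nhdsWithin).exists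
  have hpos : 0 < a ⬝ᵥ a := by simpa using Matrix.dotProduct_self_star_pos_iff.2 ha
  refine ⟨y - t • a, hts, ?_⟩
  rw [dotProduct_sub, dotProduct_smul, smul_eq_mul]
  nlinarith [show (0 : ℝ) < t from ht]

lemma exists_dotProduct_le_of_notMem_interior {s : Set (ι → ℝ)} {y : ι → ℝ} (hs : Convex ℝ s)
    (hint : (interior s).Nonempty) (hy : y ∉ interior s) :
    ∃ a ≠ 0, ∀ x ∈ s, a ⬝ᵥ y ≤ a ⬝ᵥ x := by
  classical
  obtain ⟨f, u, hf0, hfs, hfy⟩ := geometric_hahn_banach_of_nonempty_interior hs (convex_singleton y)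
    (Set.disjoint_singleton_right.2 hy) hint (Set.singleton_nonempty y)
  set e := dotProductEquiv ℝ ι
  have hf : ∀ x, e.symm f ⬝ᵥ x = f x := fun x =>
    LinearMap.congr_fun (e.apply_symm_apply (f : Module.Dual ℝ (ι → ℝ))) x
  refine ⟨-e.symm f, ?_, fun x hx => ?_⟩
  · rw [neg_ne_zero, ne_eq, e.symm_apply_eq, map_zero]
    exact fun h => hf0 (ContinuousLinearMap.coe_injective h)
  · simp only [neg_dotProduct, hf, neg_le_neg_iff]
    exact (hfs x hx).trans (hfy y rfl)

lemma add_one_mem_interior_of_forall_add_mem {s : Set (ι → ℝ)} {p : ι → ℝ}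
    (h : ∀ c, 0 ≤ c → p + c ∈ s) : p + 1 ∈ interior s := by
  have hbox : IsOpen {x : ι → ℝ | ∀ i, p i < x i} := by
    simpa only [Set.ofPred_forall] using
      isOpen_iInter_of_finite fun i => isOpen_lt continuous_const (continuous_apply i)
  refine interior_maximal (fun x hx => ?_) hbox fun i => by simp
  simpa using h (x - p) fun i => sub_nonneg.2 (hx i).le

end

def newtonPolyhedron {ι : Type*} (F : Finset (ι → ℕ)) : Set (ι → ℝ) :=
  convexHull ℝ (⋃ ν ∈ F,
    (({fun i => (ν i : ℝ)} : Set (ι → ℝ)) + {x : ι → ℝ | ∀ i, 0 ≤ x i}))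

namespace newtonPolyhedron

variable {ι : Type*} {F : Finset (ι → ℕ)}

lemma add_mem {ν : ι → ℕ} (hν : ν ∈ F) {c : ι → ℝ} (hc : 0 ≤ c) :
    (fun i => (ν i : ℝ)) + c ∈ newtonPolyhedron F :=
  subset_convexHull ℝ _ (Set.mem_biUnion hν (Set.add_mem_add rfl hc))

lemma cast_mem {ν : ι → ℕ} (hν : ν ∈ F) : (fun i => (ν i : ℝ)) ∈ newtonPolyhedron F := by
  simpa using add_mem hν le_rfl

lemma inf'_le_dotProduct [Fintype ι] (hF : F.Nonempty) {a x : ι → ℝ} (ha : 0 ≤ a)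
    (hx : x ∈ newtonPolyhedron F) : F.inf' hF (fun ν => a ⬝ᵥ fun i => (ν i : ℝ)) ≤ a ⬝ᵥ x := by
  refine convexHull_min ?_ ((convex_Ici _).linear_preimage (dotProductBilin ℝ ℝ a)) hx
  simp only [Set.iUnion_subset_iff, Set.singleton_add]
  rintro ν hν _ ⟨c, hc, rfl⟩
  have hac : 0 ≤ a ⬝ᵥ c := Finset.sum_nonneg fun i _ => mul_nonneg (ha i) (hc i)
  show _ ≤ a ⬝ᵥ ((fun i => (ν i : ℝ)) + c)
  rw [dotProduct_add]
  linarith [Finset.inf'_le (fun ν => a ⬝ᵥ fun i => (ν i : ℝ)) hν]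

end newtonPolyhedron

theorem newton_one_mem_interior_iff_general (n : ℕ)
    (F : Finset (Fin n → ℕ)) (hF : F.Nonempty)
    (Γ : Set (Fin n → ℝ))
    (hΓ : Γ = convexHull ℝ (⋃ ν ∈ F,
      (({fun i => (ν i : ℝ)} : Set (Fin n → ℝ)) +
        {x : Fin n → ℝ | ∀ i, 0 ≤ x i}))) :
    (fun _ => (1 : ℝ)) ∈ interior Γ ↔
      ∀ a : Fin n → ℝ, a ≠ 0 → (∀ i, 0 ≤ a i) →
        (F.inf' hF fun ν => ∑ i, a i * (ν i : ℝ)) < ∑ i, a i := by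
  subst hΓ
  change 1 ∈ interior (newtonPolyhedron F) ↔
    ∀ a : Fin n → ℝ, a ≠ 0 → 0 ≤ a → (F.inf' hF fun ν => a ⬝ᵥ fun i => (ν i : ℝ)) < ∑ i, a i
  simp_rw [← dotProduct_one]
  constructor
  · intro hone a ha0 ha
    obtain ⟨x, hx, hlt⟩ := exists_dotProduct_lt_of_mem_interior hone ha0
    exact (newtonPolyhedron.inf'_le_dotProduct hF ha hx).trans_lt hlt
  · intro H
    by_contra hnot
    obtain ⟨ν₀, hν₀⟩ := hF
    have hbody : (interior (newtonPolyhedron F)).Nonempty :=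
      ⟨_, add_one_mem_interior_of_forall_add_mem fun _ => newtonPolyhedron.add_mem hν₀⟩
    obtain ⟨a, ha0, hsupp⟩ :=
      exists_dotProduct_le_of_notMem_interior (convex_convexHull ℝ _) hbody hnot
    have ha : 0 ≤ a := nonneg_of_forall_dotProduct_le_dotProduct_add fun _ hc =>
      hsupp _ (newtonPolyhedron.add_mem hν₀ hc)
    have hle : a ⬝ᵥ 1 ≤ F.inf' ⟨ν₀, hν₀⟩ fun ν => a ⬝ᵥ fun i => (ν i : ℝ) :=
      Finset.le_inf' _ _ fun ν hν => hsupp _ (newtonPolyhedron.cast_mem hν)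
    exact (H a ha0 ha).not_ge hle

/-- `(1,…,1)` lies in the interior of the Newton polyhedron `Γ₊` of a nonempty
finite support `F ⊆ ℕⁿ` if and only if `m(a) < s(a)` for every nonzero
`a ≥ 0`. -/
theorem newton_one_mem_interior_iff (n : ℕ) (hn : 1 ≤ n)
    (F : Finset (Fin n → ℕ)) (hF : F.Nonempty)
    (Γ : Set (Fin n → ℝ))
    (hΓ : Γ = convexHull ℝ (⋃ ν ∈ F,
      (({fun i => (ν i : ℝ)} : Set (Fin n → ℝ)) +
        {x : Fin n → ℝ | ∀ i, 0 ≤ x i}))) :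
    (fun _ => (1 : ℝ)) ∈ interior Γ ↔
      ∀ a : Fin n → ℝ, a ≠ 0 → (∀ i, 0 ≤ a i) →
        (F.inf' hF fun ν => ∑ i, a i * (ν i : ℝ)) < ∑ i, a i :=
  newton_one_mem_interior_iff_general n F hF Γ hΓ
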